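/- Let f : ℂ → ℂᴺ be holomorphic and nowhere vanishing, and let P(ξ) = (f(ξ)·f(ξ)†)/(f(ξ)†·f(ξ)), viewed as a smooth map ℝ² → Matrix (Fin N) (Fin N) ℂ via ξ₊ = x + iy. Then the map F := −i·(P − (1/N)·I) satisfies ∂₊F = −i[∂₊P, P] and ∂₋F = i[∂₋P, P] at every point; i.e., F is an explicit integrated form of the Generalized Weierstrass immersion associated with the holomorphic solution P, F takes values in the skew-Hermitian traceless matrices (Fᴴ = −F, tr F = 0). -/

import Mathlib

open Matrix

noncomputable section

attribute [local instance] Matrix.normedAddCommGroup Matrix.normedSpace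

/-- The Wirtinger derivative `∂₊ = ½(∂/∂x − i ∂/∂y)` of a matrix-valued map on `ℝ²`. -/
def dp {N : ℕ} (P : ℝ × ℝ → Matrix (Fin N) (Fin N) ℂ) (p : ℝ × ℝ) :
    Matrix (Fin N) (Fin N) ℂ :=
  (2 : ℂ)⁻¹ • (fderiv ℝ P p (1, 0) - Complex.I • fderiv ℝ P p (0, 1))

/-- The Wirtinger derivative `∂₋ = ½(∂/∂x + i ∂/∂y)` of a matrix-valued map on `ℝ²`. -/
def dm {N : ℕ} (P : ℝ × ℝ → Matrix (Fin N) (Fin N) ℂ) (p : ℝ × ℝ) :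
    Matrix (Fin N) (Fin N) ℂ :=
  (2 : ℂ)⁻¹ • (fderiv ℝ P p (1, 0) + Complex.I • fderiv ℝ P p (0, 1))


/-- The rank-one Hermitian projector `P = (f·f†)/(f†·f)` associated to a vector-valued map
`f : ℂ → ℂᴺ`, viewed as a map on `ℝ²` via `ξ₊ = x + iy`. -/
def projOf {N : ℕ} (f : ℂ → (Fin N → ℂ)) (p : ℝ × ℝ) : Matrix (Fin N) (Fin N) ℂ :=
  (star (f ((p.1 : ℂ) + (p.2 : ℂ) * Complex.I)) ⬝ᵥ f ((p.1 : ℂ) + (p.2 : ℂ) * Complex.I))⁻¹ •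
    vecMulVec (f ((p.1 : ℂ) + (p.2 : ℂ) * Complex.I))
      (star (f ((p.1 : ℂ) + (p.2 : ℂ) * Complex.I)))

/-!
`P` is the orthogonal projector onto the line spanned by `f`, so `P² = P` and `P·(f w†) = f w†`
for every fixed vector `w`. In the second identity `f w†` is holomorphic, so applying `∂₋` gives
`∂₋P·P = 0`; as `P` is Hermitian, `∂₊P = (∂₋P)ᴴ`, whence `P·∂₊P = 0`. Differentiating `P² = P`
then yields `∂₊P·P = ∂₊P` and `P·∂₋P = ∂₋P`, i.e. `[∂₊P, P] = ∂₊P` and `[∂₋P, P] = -∂₋P`,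
while `∂±F = -i·∂±P`.
-/

open Complex

section Differentiability

variable {𝕜 : Type*} [NontriviallyNormedField 𝕜] {E : Type*} [NormedAddCommGroup E]
  [NormedSpace 𝕜 E] {A : Type*} [NormedCommRing A] [NormedAlgebra 𝕜 A]
  {n : Type*} [Fintype n] {u v : E → n → A} {x : E}

theorem DifferentiableAt.vecMulVec (hu : DifferentiableAt 𝕜 u x) (hv : DifferentiableAt 𝕜 v x) :
    DifferentiableAt 𝕜 (fun y => vecMulVec (u y) (v y)) x :=
  differentiableAt_pi.2 fun i => differentiableAt_pi.2 fun j =>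
    (differentiableAt_pi.1 hu i).mul (differentiableAt_pi.1 hv j)

theorem DifferentiableAt.dotProduct (hu : DifferentiableAt 𝕜 u x) (hv : DifferentiableAt 𝕜 v x) :
    DifferentiableAt 𝕜 (fun y => u y ⬝ᵥ v y) x :=
  DifferentiableAt.fun_sum fun i _ =>
    (differentiableAt_pi.1 hu i).mul (differentiableAt_pi.1 hv i)

end Differentiability

theorem hasFDerivAt_ofReal_add_mul_I (p : ℝ × ℝ) :
    HasFDerivAt (fun q : ℝ × ℝ => (q.1 : ℂ) + q.2 * I)
      (equivRealProdCLM.symm : ℝ × ℝ →L[ℝ] ℂ) p := by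
  have : (fun q : ℝ × ℝ => (q.1 : ℂ) + q.2 * I) = equivRealProdCLM.symm :=
    funext fun q => (equivRealProdCLM_symm_apply q).symm
  rw [this]
  exact equivRealProdCLM.symm.hasFDerivAt

section Wirtinger

variable {N : ℕ} {A B : ℝ × ℝ → Matrix (Fin N) (Fin N) ℂ} {p : ℝ × ℝ}

theorem fderiv_matrix_mul (hA : DifferentiableAt ℝ A p) (hB : DifferentiableAt ℝ B p)
    (v : ℝ × ℝ) :
    fderiv ℝ (fun q => A q * B q) p v = A p * fderiv ℝ B p v + fderiv ℝ A p v * B p :=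
  congrArg (· v) ((LinearMap.mul ℝ (Matrix (Fin N) (Fin N) ℂ)).toContinuousBilinearMap
    |>.hasFDerivAt_of_bilinear hA.hasFDerivAt hB.hasFDerivAt).fderiv

theorem dp_mul (hA : DifferentiableAt ℝ A p) (hB : DifferentiableAt ℝ B p) :
    dp (fun q => A q * B q) p = dp A p * B p + A p * dp B p := by
  simp only [dp, fderiv_matrix_mul hA hB, smul_mul_assoc, mul_smul_comm, sub_mul, mul_sub]
  module

theorem dm_mul (hA : DifferentiableAt ℝ A p) (hB : DifferentiableAt ℝ B p) :
    dm (fun q => A q * B q) p = dm A p * B p + A p * dm B p := by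
  simp only [dm, fderiv_matrix_mul hA hB, smul_mul_assoc, mul_smul_comm, add_mul, mul_add]
  module

theorem dp_mul_add_mul_dp_of_idempotent (hA : DifferentiableAt ℝ A p)
    (hAA : ∀ q, A q * A q = A q) :
    dp A p * A p + A p * dp A p = dp A p := by
  rw [← dp_mul hA hA, funext hAA]

theorem dm_mul_add_mul_dm_of_idempotent (hA : DifferentiableAt ℝ A p)
    (hAA : ∀ q, A q * A q = A q) :
    dm A p * A p + A p * dm A p = dm A p := by
  rw [← dm_mul hA hA, funext hAA]

theorem dp_smul_sub_const (c : ℂ) (K : Matrix (Fin N) (Fin N) ℂ) (hA : DifferentiableAt ℝ A p) :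
    dp (fun q => c • (A q - K)) p = c • dp A p := by
  have H : HasFDerivAt (fun q => c • (A q - K)) (c • fderiv ℝ A p) p :=
    (hA.hasFDerivAt.sub_const K).const_smul c
  rw [dp, dp, H.fderiv]
  simp only [_root_.smul_apply]
  module

theorem dm_smul_sub_const (c : ℂ) (K : Matrix (Fin N) (Fin N) ℂ) (hA : DifferentiableAt ℝ A p) :
    dm (fun q => c • (A q - K)) p = c • dm A p := by
  have H : HasFDerivAt (fun q => c • (A q - K)) (c • fderiv ℝ A p) p :=
    (hA.hasFDerivAt.sub_const K).const_smul c
  rw [dm, dm, H.fderiv]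
  simp only [_root_.smul_apply]
  module

theorem dp_star (A : ℝ × ℝ → Matrix (Fin N) (Fin N) ℂ) (p : ℝ × ℝ) :
    dp (fun q => star (A q)) p = star (dm A p) := by
  have h (v : ℝ × ℝ) : fderiv ℝ (fun q => star (A q)) p v = star (fderiv ℝ A p v) :=
    congrArg (· v) (fderiv_star (𝕜 := ℝ) (f := A) (x := p))
  simp only [dp, dm, h, star_smul, star_add, star_inv₀, star_ofNat, Complex.star_def,
    Complex.conj_I, neg_smul, sub_eq_add_neg]

theorem dm_comp_ofReal_add_mul_I_eq_zero {h : ℂ → Matrix (Fin N) (Fin N) ℂ}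
    (hh : DifferentiableAt ℂ h (p.1 + p.2 * I)) :
    dm (fun q => h (q.1 + q.2 * I)) p = 0 := by
  have H : HasFDerivAt (fun q : ℝ × ℝ => h ((q.1 : ℂ) + q.2 * I))
      (((fderiv ℂ h (p.1 + p.2 * I)).restrictScalars ℝ).comp
        (equivRealProdCLM.symm : ℝ × ℝ →L[ℝ] ℂ)) p :=
    (hh.hasFDerivAt.restrictScalars ℝ).comp p (hasFDerivAt_ofReal_add_mul_I p)
  have hv (v : ℝ × ℝ) : fderiv ℝ (fun q : ℝ × ℝ => h ((q.1 : ℂ) + q.2 * I)) p v =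
      ((v.1 : ℂ) + v.2 * I) • fderiv ℂ h (p.1 + p.2 * I) 1 := by
    rw [H.fderiv]
    simpa [equivRealProdCLM_symm_apply] using
      (fderiv ℂ h (p.1 + p.2 * I)).map_smul ((v.1 : ℂ) + v.2 * I) 1
  simp [dm, hv, smul_smul]

end Wirtinger

section RankOneProjector

variable {n : Type*} [Fintype n] {u : n → ℂ}

def rankOneProj (u : n → ℂ) : Matrix n n ℂ :=
  (star u ⬝ᵥ u)⁻¹ • vecMulVec u (star u)

theorem dotProduct_star_self_ne_zero (hu : u ≠ 0) : star u ⬝ᵥ u ≠ 0 := by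
  open scoped ComplexOrder in
  exact fun h => hu (dotProduct_star_self_eq_zero.mp h)

theorem rankOneProj_mul_vecMulVec (hu : u ≠ 0) (w : n → ℂ) :
    rankOneProj u * vecMulVec u w = vecMulVec u w := by
  rw [rankOneProj, smul_mul_assoc, vecMulVec_mul_vecMulVec, vecMulVec_smul, smul_smul,
    inv_mul_cancel₀ (dotProduct_star_self_ne_zero hu), one_smul]

theorem rankOneProj_mul_self (hu : u ≠ 0) : rankOneProj u * rankOneProj u = rankOneProj u := by
  conv_lhs => arg 2; rw [rankOneProj]
  rw [mul_smul_comm, rankOneProj_mul_vecMulVec hu]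
  rfl

theorem star_rankOneProj (u : n → ℂ) : star (rankOneProj u) = rankOneProj u := by
  rw [rankOneProj, star_smul, star_inv₀, star_eq_conjTranspose, conjTranspose_vecMulVec, star_star,
    ← star_dotProduct]

theorem trace_rankOneProj (hu : u ≠ 0) : (rankOneProj u).trace = 1 := by
  rw [rankOneProj, trace_smul, trace_vecMulVec, dotProduct_comm u, smul_eq_mul,
    inv_mul_cancel₀ (dotProduct_star_self_ne_zero hu)]

end RankOneProjector

section Projector

variable {N : ℕ} {f : ℂ → Fin N → ℂ} {p : ℝ × ℝ}

theorem projOf_eq_rankOneProj (f : ℂ → Fin N → ℂ) (p : ℝ × ℝ) :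
    projOf f p = rankOneProj (f (p.1 + p.2 * I)) :=
  rfl

theorem differentiableAt_projOf (hf : DifferentiableAt ℂ f (p.1 + p.2 * I))
    (hf0 : f (p.1 + p.2 * I) ≠ 0) : DifferentiableAt ℝ (projOf f) p := by
  have hg : DifferentiableAt ℝ (fun q : ℝ × ℝ => f (q.1 + q.2 * I)) p :=
    (hf.restrictScalars ℝ).comp p (hasFDerivAt_ofReal_add_mul_I p).differentiableAt
  exact ((hg.star.dotProduct hg).inv (dotProduct_star_self_ne_zero hf0)).smul
    (hg.vecMulVec hg.star)

variable (hf : DifferentiableAt ℂ f (p.1 + p.2 * I)) (hf0 : ∀ z, f z ≠ 0)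
include hf hf0

theorem dm_projOf_mul_projOf : dm (projOf f) p * projOf f p = 0 := by
  set u := f (p.1 + p.2 * I)
  set H : ℝ × ℝ → Matrix (Fin N) (Fin N) ℂ := fun q => vecMulVec (f (q.1 + q.2 * I)) (star u)
  have hH : DifferentiableAt ℝ H p :=
    ((hf.restrictScalars ℝ).comp p (hasFDerivAt_ofReal_add_mul_I p).differentiableAt).vecMulVec
      (differentiableAt_const _)
  have hPH : (fun q => projOf f q * H q) = H :=
    funext fun q => rankOneProj_mul_vecMulVec (hf0 _) _
  have hdmH : dm H p = 0 :=
    dm_comp_ofReal_add_mul_I_eq_zero (hf.vecMulVec (differentiableAt_const _))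
  have hdm := dm_mul (differentiableAt_projOf hf (hf0 _)) hH
  rw [hPH, hdmH, mul_zero, add_zero] at hdm
  rw [projOf_eq_rankOneProj, rankOneProj, mul_smul_comm]
  exact smul_eq_zero_of_right _ hdm.symm

theorem projOf_mul_dp_projOf : projOf f p * dp (projOf f) p = 0 := by
  have hstar (q : ℝ × ℝ) : star (projOf f q) = projOf f q := star_rankOneProj _
  have h := congrArg star (dm_projOf_mul_projOf hf hf0)
  rwa [star_mul, ← dp_star, funext hstar, hstar, star_zero] at h

theorem dp_projOf_mul_projOf : dp (projOf f) p * projOf f p = dp (projOf f) p := by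
  simpa [projOf_mul_dp_projOf hf hf0] using dp_mul_add_mul_dp_of_idempotent
    (differentiableAt_projOf hf (hf0 _)) fun q => rankOneProj_mul_self (hf0 _)

theorem projOf_mul_dm_projOf : projOf f p * dm (projOf f) p = dm (projOf f) p := by
  simpa [dm_projOf_mul_projOf hf hf0] using dm_mul_add_mul_dm_of_idempotent
    (differentiableAt_projOf hf (hf0 _)) fun q => rankOneProj_mul_self (hf0 _)

end Projector

/-- For the projector `P` associated to a nowhere-vanishing holomorphic `f : ℂ → ℂᴺ`, the map
`F = −i·(P − (1/N)·I)` is an integrated form of the Generalized Weierstrass immersion: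
`∂₊F = −i[∂₊P, P]`, `∂₋F = i[∂₋P, P]`, and `F` is skew-Hermitian and traceless. -/
theorem integrated_GW_immersion_holomorphic {N : ℕ} (f : ℂ → (Fin N → ℂ))
    (hf : Differentiable ℂ f) (hf0 : ∀ ξ, f ξ ≠ 0)
    (P : ℝ × ℝ → Matrix (Fin N) (Fin N) ℂ) (hPdef : P = projOf f)
    (F : ℝ × ℝ → Matrix (Fin N) (Fin N) ℂ)
    (hF : F = fun p => (-Complex.I) • (P p - ((N : ℂ))⁻¹ • (1 : Matrix (Fin N) (Fin N) ℂ))) :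
    ∀ p, dp F p = (-Complex.I) • (dp P p * P p - P p * dp P p)
      ∧ dm F p = Complex.I • (dm P p * P p - P p * dm P p)
      ∧ (F p)ᴴ = -F p
      ∧ (F p).trace = 0 := by
  intro p
  subst hPdef hF
  have hP := differentiableAt_projOf (hf _) (hf0 (p.1 + p.2 * I))
  have hN : (N : ℂ) ≠ 0 := by
    rintro hN
    obtain rfl : N = 0 := by exact_mod_cast hN
    exact hf0 0 (Subsingleton.elim _ _)
  refine ⟨?_, ?_, ?_, ?_⟩
  · rw [dp_smul_sub_const _ _ hP, dp_projOf_mul_projOf (hf _) hf0,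
      projOf_mul_dp_projOf (hf _) hf0, sub_zero]
  · rw [dm_smul_sub_const _ _ hP, dm_projOf_mul_projOf (hf _) hf0,
      projOf_mul_dm_projOf (hf _) hf0, zero_sub, smul_neg, neg_smul]
  · simp [← star_eq_conjTranspose, projOf_eq_rankOneProj, star_rankOneProj]
  · simp [projOf_eq_rankOneProj, trace_rankOneProj (hf0 _), hN]
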